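/- Nishimori gauge identity mixing one- and two-bond correlations: for every pair of bonds b, b' ∈ B, [⟨S_b⟩⟨S_{b'}⟩] = [⟨S_b S_{b'}⟩⟨S_{b'}⟩]. -/

import Mathlib

open MeasureTheory ProbabilityTheory Filter

noncomputable section

/-- The real value ±1 of a Boolean spin. -/
def spin (s : Bool) : ℝ := if s then 1 else -1

/-- The bond spin `S_b = S_n S_{n'}` for a bond `b` with endpoints `ep b = (n, n')`. -/
def bondSpin {V ι : Type*} (ep : ι → V × V) (S : V → Bool) (b : ι) : ℝ :=
  spin (S (ep b).1) * spin (S (ep b).2)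

/-- The potential `U(j, S) = Σ_b x_b j_b S_b`. -/
def potential {V ι : Type*} [Fintype ι] (ep : ι → V × V) (x j : ι → ℝ)
    (S : V → Bool) : ℝ :=
  ∑ b, x b * j b * bondSpin ep S b

/-- The partition function `Z(j) = Σ_S exp U(j,S)`. -/
def partitionFn {V ι : Type*} [Fintype V] [DecidableEq V] [Fintype ι]
    (ep : ι → V × V) (x j : ι → ℝ) : ℝ :=
  ∑ S : V → Bool, Real.exp (potential ep x j S)

/-- The Boltzmann–Gibbs expectation `⟨f⟩` at fixed disorder `j`. -/
def gibbs {V ι : Type*} [Fintype V] [DecidableEq V] [Fintype ι]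
    (ep : ι → V × V) (x j : ι → ℝ) (f : (V → Bool) → ℝ) : ℝ :=
  (∑ S : V → Bool, f S * Real.exp (potential ep x j S)) / partitionFn ep x j

/-- The law of the couplings: independent Gaussians, `j_b` of mean `x_b` and variance 1. -/
def couplings {ι : Type*} [Fintype ι] (x : ι → ℝ) : Measure (ι → ℝ) :=
  Measure.pi fun b => gaussianReal (x b) 1

/-- The quenched average `[F]`. -/
def quenched {ι : Type*} [Fintype ι] (x : ι → ℝ) (F : (ι → ℝ) → ℝ) : ℝ :=
  ∫ j, F j ∂(couplings x)

/-- The quenched pressure `P({x}) = [ln Z]`. -/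
def pressure {V ι : Type*} [Fintype V] [DecidableEq V] [Fintype ι]
    (ep : ι → V × V) (x : ι → ℝ) : ℝ :=
  quenched x fun j => Real.log (partitionFn ep x j)

/-!
Gauge symmetry on the Nishimori line. For `τ : V → Bool` the gauge transformation
`S ↦ τS`, `j_b ↦ τ_b j_b` leaves `Z` invariant and multiplies `⟨S_b⟩` by `τ_b`. Because the
mean of `j_b` equals the coefficient `x_b` in `U`, flipping `j_b ↦ τ_b j_b` changes the Gaussian
density of the couplings by the factor `exp (U(j, τ) - Σ_b x_b j_b)`, whose first part is a
Boltzmann weight. Averaging over `τ` therefore turns `[F]`, for `F` gauge covariant with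
character `χ`, into `[F ⟨χ⟩ w]` with a fixed weight `w`. Both sides of the identity are gauge
covariant, with characters `τ_b τ_{b'}` and `τ_b`, and both become
`[⟨S_b⟩ ⟨S_{b'}⟩ ⟨S_b S_{b'}⟩ w]`.
-/

open scoped ENNReal

theorem lintegral_fintype_prod_eq_prod {ι : Type*} [Fintype ι] {X : ι → Type*}
    [∀ i, MeasurableSpace (X i)] (μ : ∀ i, Measure (X i)) [∀ i, IsProbabilityMeasure (μ i)]
    {f : ∀ i, X i → ℝ≥0∞} (hf : ∀ i, Measurable (f i)) :
    ∫⁻ x, ∏ i, f i (x i) ∂Measure.pi μ = ∏ i, ∫⁻ t, f i t ∂μ i := by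
  refine (lintegral_prod_eq_prod_lintegral_of_indepFun Finset.univ
    (fun i (x : ∀ i, X i) => f i (x i)) (iIndepFun_pi fun i => (hf i).aemeasurable)
    fun i => (hf i).comp (measurable_pi_apply i)).trans ?_
  exact Finset.prod_congr rfl fun i _ => (measurePreserving_eval μ i).lintegral_comp (hf i)

lemma gaussianPDFReal_mul_exp (m t : ℝ) {ε : ℝ} (hε : ε ^ 2 = 1) :
    gaussianPDFReal m 1 t * Real.exp (m * t * (ε - 1)) = gaussianPDFReal (ε * m) 1 t := by
  simp only [gaussianPDFReal, NNReal.coe_one, mul_one, mul_assoc, ← Real.exp_add]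
  congr 2
  linear_combination (m ^ 2 / 2) * hε

lemma map_mul_withDensity_gaussianReal (m : ℝ) {ε : ℝ} (hε : ε ^ 2 = 1) :
    ((gaussianReal m 1).withDensity fun t => ENNReal.ofReal (Real.exp (m * t * (ε - 1)))).map
      (ε * ·) = gaussianReal m 1 := by
  have hpdf : (gaussianPDF m 1 * fun t => ENNReal.ofReal (Real.exp (m * t * (ε - 1))))
      = gaussianPDF (ε * m) 1 := by
    ext t
    simp only [Pi.mul_apply, gaussianPDF, ← ENNReal.ofReal_mul (gaussianPDFReal_nonneg _ _ _),
      gaussianPDFReal_mul_exp m t hε]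
  rw [gaussianReal_of_var_ne_zero _ one_ne_zero, ← withDensity_mul _ (measurable_gaussianPDF _ _)
    (by fun_prop), hpdf, ← gaussianReal_of_var_ne_zero _ one_ne_zero, gaussianReal_map_const_mul,
    ← gaussianReal_of_var_ne_zero _ one_ne_zero]
  congr 1
  · linear_combination m * hε
  · ext
    simp [hε]

lemma measurableEmbedding_mul_left_of_sq_eq_one {ι : Type*} {ε : ι → ℝ}
    (hε : ∀ b, ε b ^ 2 = 1) : MeasurableEmbedding (ε * · : (ι → ℝ) → ι → ℝ) := by
  have hmeas : Measurable (ε * · : (ι → ℝ) → ι → ℝ) := by fun_prop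
  have hinv : Function.Involutive (ε * · : (ι → ℝ) → ι → ℝ) := fun j => by
    ext b
    simp [← mul_assoc, ← sq, hε]
  exact (MeasurableEquiv.mk (hinv.toPerm _) hmeas hmeas).measurableEmbedding

section SignFlip

variable {ι : Type*} [Fintype ι]

lemma couplings_eq_map_withDensity (m ε : ι → ℝ) (hε : ∀ b, ε b ^ 2 = 1) :
    couplings m = ((couplings m).withDensity fun j =>
      ENNReal.ofReal (Real.exp (∑ b, m b * j b * (ε b - 1)))).map (ε * ·) := by
  refine Measure.pi_eq fun s hs => ?_
  have hbox : MeasurableSet ((ε * ·) ⁻¹' Set.univ.pi s) :=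
    (by fun_prop : Measurable (ε * ·)) (MeasurableSet.univ_pi hs)
  rw [Measure.map_apply (by fun_prop) (MeasurableSet.univ_pi hs), withDensity_apply _ hbox,
    ← lintegral_indicator hbox]
  calc _ = ∫⁻ j, ∏ b, ((ε b * ·) ⁻¹' s b).indicator
          (fun t => ENNReal.ofReal (Real.exp (m b * t * (ε b - 1)))) (j b) ∂couplings m := by
        congr 1
        ext j
        classical
        simp only [Set.indicator_apply, Set.mem_preimage, Set.mem_univ_pi, Pi.mul_apply,
          Real.exp_sum, ENNReal.ofReal_prod_of_nonneg fun b _ => (Real.exp_pos _).le]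
        rw [Finset.prod_ite_zero]
        simp only [Finset.mem_univ, forall_const]
    _ = ∏ b, (((gaussianReal (m b) 1).withDensity fun t =>
          ENNReal.ofReal (Real.exp (m b * t * (ε b - 1)))).map (ε b * ·)) (s b) := by
        rw [couplings, lintegral_fintype_prod_eq_prod _ fun b =>
          (by fun_prop : Measurable _).indicator (measurable_const_mul _ (hs b))]
        refine Finset.prod_congr rfl fun b _ => ?_
        rw [Measure.map_apply (by fun_prop) (hs b),
          withDensity_apply _ (measurable_const_mul _ (hs b)),
          lintegral_indicator (measurable_const_mul _ (hs b))]
    _ = _ := by simp_rw [map_mul_withDensity_gaussianReal _ (hε _)]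

theorem integral_couplings_eq_integral_mul_exp (m ε : ι → ℝ) (hε : ∀ b, ε b ^ 2 = 1)
    (F : (ι → ℝ) → ℝ) :
    ∫ j, F j ∂couplings m
      = ∫ j, F (ε * j) * Real.exp (∑ b, m b * j b * (ε b - 1)) ∂couplings m := by
  conv_lhs => rw [couplings_eq_map_withDensity m ε hε]
  rw [(measurableEmbedding_mul_left_of_sq_eq_one hε).integral_map,
    integral_withDensity_eq_integral_toReal_smul (by fun_prop)
      (ae_of_all _ fun _ => ENNReal.ofReal_lt_top)]
  simp only [ENNReal.toReal_ofReal (Real.exp_pos _).le, smul_eq_mul, mul_comm]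

theorem integrable_comp_mul_mul_exp {m ε : ι → ℝ} (hε : ∀ b, ε b ^ 2 = 1)
    {F : (ι → ℝ) → ℝ} (hF : Integrable F (couplings m)) :
    Integrable (fun j => F (ε * j) * Real.exp (∑ b, m b * j b * (ε b - 1))) (couplings m) := by
  rw [couplings_eq_map_withDensity m ε hε,
    (measurableEmbedding_mul_left_of_sq_eq_one hε).integrable_map_iff,
    integrable_withDensity_iff_integrable_smul' (by fun_prop)
      (ae_of_all _ fun _ => ENNReal.ofReal_lt_top)] at hF
  simpa only [Function.comp_apply, ENNReal.toReal_ofReal (Real.exp_pos _).le, smul_eq_mul,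
    mul_comm] using hF

instance isProbabilityMeasure_couplings (x : ι → ℝ) : IsProbabilityMeasure (couplings x) := by
  unfold couplings
  infer_instance

end SignFlip

section Gauge

variable {V ι : Type*}

/-- The gauge transform `(τS)_v = τ_v S_v`, since `spin (a == c) = spin a * spin c`. -/
def gaugeTransform (τ S : V → Bool) : V → Bool := fun v => S v == τ v

lemma gaugeTransform_involutive (τ : V → Bool) : Function.Involutive (gaugeTransform τ) :=
  fun S => by
    ext v
    unfold gaugeTransform
    cases S v <;> cases τ v <;> rfl

lemma bondSpin_sq (ep : ι → V × V) (S : V → Bool) (b : ι) : bondSpin ep S b ^ 2 = 1 := by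
  unfold bondSpin spin
  split_ifs <;> norm_num

lemma abs_bondSpin (ep : ι → V × V) (S : V → Bool) (b : ι) : |bondSpin ep S b| = 1 := by
  unfold bondSpin spin
  split_ifs <;> norm_num

lemma bondSpin_gaugeTransform (ep : ι → V × V) (τ S : V → Bool) (b : ι) :
    bondSpin ep (gaugeTransform τ S) b = bondSpin ep τ b * bondSpin ep S b := by
  unfold bondSpin gaugeTransform
  cases S (ep b).1 <;> cases τ (ep b).1 <;> cases S (ep b).2 <;> cases τ (ep b).2 <;>
    norm_num [spin]

variable [Fintype ι] (ep : ι → V × V) (x : ι → ℝ)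

lemma potential_bondSpin_mul (j : ι → ℝ) (τ S : V → Bool) :
    potential ep x (bondSpin ep τ * j) S = potential ep x j (gaugeTransform τ S) := by
  simp only [potential, bondSpin_gaugeTransform, Pi.mul_apply]
  exact Finset.sum_congr rfl fun b _ => by ring

lemma sum_mul_bondSpin_sub_one (j : ι → ℝ) (τ : V → Bool) :
    ∑ b, x b * j b * (bondSpin ep τ b - 1) = potential ep x j τ + -∑ b, x b * j b := by
  rw [potential, ← sub_eq_add_neg, ← Finset.sum_sub_distrib]
  exact Finset.sum_congr rfl fun b _ => by ring

/-- This is where the Nishimori condition enters: the Gaussian tilt produced by the gauge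
transformation is the Boltzmann weight of `τ`. -/
theorem quenched_eq_quenched_bondSpin_mul (τ : V → Bool) (F : (ι → ℝ) → ℝ) :
    quenched x F = quenched x fun j => F (bondSpin ep τ * j) *
      (Real.exp (potential ep x j τ) * Real.exp (-∑ b, x b * j b)) := by
  rw [quenched, quenched, integral_couplings_eq_integral_mul_exp x _ (bondSpin_sq ep τ) F]
  simp only [sum_mul_bondSpin_sub_one, Real.exp_add]

theorem integrable_bondSpin_mul_mul_exp {F : (ι → ℝ) → ℝ} (hF : Integrable F (couplings x))
    (τ : V → Bool) :
    Integrable (fun j => F (bondSpin ep τ * j) *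
      (Real.exp (potential ep x j τ) * Real.exp (-∑ b, x b * j b))) (couplings x) := by
  simpa only [sum_mul_bondSpin_sub_one, Real.exp_add] using
    integrable_comp_mul_mul_exp (bondSpin_sq ep τ) hF

variable [Fintype V] [DecidableEq V]

lemma partitionFn_pos (j : ι → ℝ) : 0 < partitionFn ep x j :=
  Finset.sum_pos (fun _ _ => Real.exp_pos _) Finset.univ_nonempty

lemma partitionFn_bondSpin_mul (j : ι → ℝ) (τ : V → Bool) :
    partitionFn ep x (bondSpin ep τ * j) = partitionFn ep x j := by
  simp only [partitionFn, potential_bondSpin_mul]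
  exact Equiv.sum_comp ((gaugeTransform_involutive τ).toPerm _) fun S =>
    Real.exp (potential ep x j S)

lemma gibbs_bondSpin_mul (j : ι → ℝ) (τ : V → Bool) (f : (V → Bool) → ℝ) :
    gibbs ep x (bondSpin ep τ * j) f = gibbs ep x j (fun S => f (gaugeTransform τ S)) := by
  simp only [gibbs, partitionFn_bondSpin_mul, potential_bondSpin_mul]
  congr 1
  rw [← Equiv.sum_comp ((gaugeTransform_involutive τ).toPerm _)]
  simp only [Function.Involutive.coe_toPerm, gaugeTransform_involutive τ _]

lemma gibbs_mul_partitionFn (j : ι → ℝ) (f : (V → Bool) → ℝ) :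
    gibbs ep x j f * partitionFn ep x j = ∑ S, f S * Real.exp (potential ep x j S) :=
  div_mul_cancel₀ _ (partitionFn_pos ep x j).ne'

lemma gibbs_const_mul (j : ι → ℝ) (c : ℝ) (f : (V → Bool) → ℝ) :
    gibbs ep x j (fun S => c * f S) = c * gibbs ep x j f := by
  simp only [gibbs, mul_assoc, ← Finset.mul_sum, mul_div_assoc]

lemma gibbs_bondSpin_mul_of_gaugeTransform (j : ι → ℝ) {f : (V → Bool) → ℝ} {τ : V → Bool}
    {c : ℝ} (hf : ∀ S, f (gaugeTransform τ S) = c * f S) :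
    gibbs ep x (bondSpin ep τ * j) f = c * gibbs ep x j f := by
  simp only [gibbs_bondSpin_mul, hf, gibbs_const_mul]

lemma gibbs_bondSpin_mul_bond (j : ι → ℝ) (τ : V → Bool) (c : ι) :
    gibbs ep x (bondSpin ep τ * j) (fun S => bondSpin ep S c)
      = bondSpin ep τ c * gibbs ep x j (fun S => bondSpin ep S c) :=
  gibbs_bondSpin_mul_of_gaugeTransform ep x j fun S => bondSpin_gaugeTransform ep τ S c

lemma gibbs_bondSpin_mul_bond_mul_bond (j : ι → ℝ) (τ : V → Bool) (c c' : ι) :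
    gibbs ep x (bondSpin ep τ * j) (fun S => bondSpin ep S c * bondSpin ep S c')
      = bondSpin ep τ c * bondSpin ep τ c' *
          gibbs ep x j (fun S => bondSpin ep S c * bondSpin ep S c') :=
  gibbs_bondSpin_mul_of_gaugeTransform ep x j fun S => by
    rw [bondSpin_gaugeTransform, bondSpin_gaugeTransform]
    ring

lemma abs_gibbs_le (j : ι → ℝ) {f : (V → Bool) → ℝ} {C : ℝ} (hf : ∀ S, |f S| ≤ C) :
    |gibbs ep x j f| ≤ C := by
  have hZ := partitionFn_pos ep x j
  rw [gibbs, abs_div, abs_of_pos hZ, div_le_iff₀ hZ, partitionFn, Finset.mul_sum]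
  refine (Finset.abs_sum_le_sum_abs _ _).trans (Finset.sum_le_sum fun S _ => ?_)
  rw [abs_mul, abs_of_pos (Real.exp_pos _)]
  exact mul_le_mul_of_nonneg_right (hf S) (Real.exp_pos _).le

lemma measurable_gibbs (f : (V → Bool) → ℝ) : Measurable fun j => gibbs ep x j f := by
  unfold gibbs partitionFn potential
  fun_prop

lemma integrable_gibbs_mul_gibbs (μ : Measure (ι → ℝ)) [IsFiniteMeasure μ]
    {f g : (V → Bool) → ℝ} (hf : ∀ S, |f S| ≤ 1) (hg : ∀ S, |g S| ≤ 1) :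
    Integrable (fun j => gibbs ep x j f * gibbs ep x j g) μ := by
  refine .of_bound ((measurable_gibbs ep x f).mul (measurable_gibbs ep x g)).aestronglyMeasurable
    1 (ae_of_all _ fun j => ?_)
  rw [Real.norm_eq_abs, abs_mul]
  exact mul_le_one₀ (abs_gibbs_le ep x j hf) (abs_nonneg _) (abs_gibbs_le ep x j hg)

/-- `2^{-|V|} Σ_τ exp (U(j, τ) - Σ_b x_b j_b)`: the Radon–Nikodym derivative, with respect to the
law of the couplings, of its average over all gauge transformations. -/
def gaugeDensity (j : ι → ℝ) : ℝ :=
  partitionFn ep x j * Real.exp (-∑ b, x b * j b) / Fintype.card (V → Bool)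

theorem quenched_eq_quenched_mul_gibbs_mul_gaugeDensity {F : (ι → ℝ) → ℝ}
    (hF : Integrable F (couplings x)) (χ : (V → Bool) → ℝ)
    (hχ : ∀ τ j, F (bondSpin ep τ * j) = χ τ * F j) :
    quenched x F = quenched x fun j => F j * gibbs ep x j χ * gaugeDensity ep x j := by
  have hcard : (Fintype.card (V → Bool) : ℝ) ≠ 0 := Nat.cast_ne_zero.mpr Fintype.card_ne_zero
  calc quenched x F = (Fintype.card (V → Bool) : ℝ)⁻¹ * ∑ τ : V → Bool, quenched x F := by
        rw [Finset.sum_const, Finset.card_univ, nsmul_eq_mul, inv_mul_cancel_left₀ hcard]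
    _ = (Fintype.card (V → Bool) : ℝ)⁻¹ * ∫ j, ∑ τ : V → Bool, F (bondSpin ep τ * j) *
          (Real.exp (potential ep x j τ) * Real.exp (-∑ b, x b * j b)) ∂couplings x := by
        rw [integral_finsetSum _ fun τ _ => integrable_bondSpin_mul_mul_exp ep x hF τ]
        exact congrArg _ (Finset.sum_congr rfl fun τ _ =>
          quenched_eq_quenched_bondSpin_mul ep x τ F)
    _ = _ := by
        rw [quenched, ← integral_const_mul]
        congr 1
        ext j
        have hterm : ∀ τ, F (bondSpin ep τ * j) *
            (Real.exp (potential ep x j τ) * Real.exp (-∑ b, x b * j b))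
              = χ τ * Real.exp (potential ep x j τ) * (F j * Real.exp (-∑ b, x b * j b)) :=
          fun τ => by rw [hχ]; ring
        rw [Finset.sum_congr rfl fun τ _ => hterm τ, ← Finset.sum_mul, ← gibbs_mul_partitionFn,
          gaugeDensity]
        ring

end Gauge

theorem nishimori_mixed_identity_general
    {V ι : Type*} [Fintype V] [DecidableEq V] [Fintype ι]
    (ep : ι → V × V)
    (x : ι → ℝ) (b b' : ι) :
    quenched x (fun j =>
        gibbs ep x j (fun S => bondSpin ep S b) * gibbs ep x j (fun S => bondSpin ep S b')) =
      quenched x (fun j =>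
        gibbs ep x j (fun S => bondSpin ep S b * bondSpin ep S b') *
          gibbs ep x j (fun S => bondSpin ep S b')) := by
  have hbound : ∀ c S, |bondSpin ep S c| ≤ 1 := fun c S => (abs_bondSpin ep S c).le
  have hbound₂ : ∀ S, |bondSpin ep S b * bondSpin ep S b'| ≤ 1 := fun S => by
    rw [abs_mul, abs_bondSpin, abs_bondSpin, one_mul]
  rw [quenched_eq_quenched_mul_gibbs_mul_gaugeDensity ep x
      (integrable_gibbs_mul_gibbs ep x _ (hbound b) (hbound b'))
      (fun τ => bondSpin ep τ b * bondSpin ep τ b') fun τ j => by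
        rw [gibbs_bondSpin_mul_bond, gibbs_bondSpin_mul_bond]
        ring,
    quenched_eq_quenched_mul_gibbs_mul_gaugeDensity ep x
      (integrable_gibbs_mul_gibbs ep x _ hbound₂ (hbound b'))
      (fun τ => bondSpin ep τ b) fun τ j => by
        rw [gibbs_bondSpin_mul_bond_mul_bond, gibbs_bondSpin_mul_bond]
        grind [bondSpin_sq ep τ b']]
  congr 1
  ext j
  ring

/-- Nishimori gauge identity mixing one- and two-bond correlations:
for all bonds `b, b'`, `[⟨S_b⟩⟨S_{b'}⟩] = [⟨S_b S_{b'}⟩⟨S_{b'}⟩]`. -/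
theorem nishimori_mixed_identity
    {V ι : Type*} [Fintype V] [DecidableEq V] [Fintype ι]
    (ep : ι → V × V) (hep : ∀ b, (ep b).1 ≠ (ep b).2)
    (x : ι → ℝ) (hx : ∀ b, 0 ≤ x b) (b b' : ι) :
    quenched x (fun j =>
        gibbs ep x j (fun S => bondSpin ep S b) * gibbs ep x j (fun S => bondSpin ep S b')) =
      quenched x (fun j =>
        gibbs ep x j (fun S => bondSpin ep S b * bondSpin ep S b') *
          gibbs ep x j (fun S => bondSpin ep S b')) :=
  nishimori_mixed_identity_general ep x b b'

end
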